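/- For K grouped random effects, the non-preconditioned matrix Σ^{-1}+Z^T W Z satisfies: (i) 1/max_i(Σ_{ii}) + K·min_i((Z^T W Z)_{ii}) ≤ λ_max ≤ 1/min_i(Σ_{ii}) + K·max_i((Z^T W Z)_{ii}), and (ii) its K−1 smallest eigenvalues all lie in [1/max_i(Σ_{ii}), 1/min_i(Σ_{ii})]. -/

import Mathlib

open Matrix Finset

/-! Write `M = D + A` with `D = diagonal s⁻¹` and `A = Zᵀ W Z ⪰ 0`. Each row of `Z` holds
exactly `K` ones, so the row sums of `A` are `K` times its diagonal and the row sums of `M` are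
`s_i⁻¹ + K A_ii`. The Rayleigh quotient at the all-ones vector bounds `λ_max` below by their
minimum, and Gershgorin's theorem (all off-diagonal entries are nonnegative) bounds it above by
their maximum. Every eigenvalue is at least `min D` because `A ⪰ 0`. Finally, block-constant
vectors with total zero lie in `ker Z`, a subspace of dimension `≥ K - 1` on which `M` acts as
`D`, so by Courant–Fischer the `K - 1` smallest eigenvalues are at most `max D`. -/

section Diagonal

variable {ι : Type*} [Fintype ι] [DecidableEq ι] {d : ι → ℝ}

theorem Matrix.dotProduct_diagonal_mulVec_le {b : ℝ} (hd : ∀ i, d i ≤ b) (x : ι → ℝ) :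
    x ⬝ᵥ diagonal d *ᵥ x ≤ b * (x ⬝ᵥ x) := by
  simp only [dotProduct, mulVec_diagonal, mul_sum]
  exact sum_le_sum fun i _ => by
    nlinarith [mul_le_mul_of_nonneg_right (hd i) (mul_self_nonneg (x i))]

theorem Matrix.le_dotProduct_diagonal_mulVec {a : ℝ} (hd : ∀ i, a ≤ d i) (x : ι → ℝ) :
    a * (x ⬝ᵥ x) ≤ x ⬝ᵥ diagonal d *ᵥ x := by
  simp only [dotProduct, mulVec_diagonal, mul_sum]
  exact sum_le_sum fun i _ => by
    nlinarith [mul_le_mul_of_nonneg_right (hd i) (mul_self_nonneg (x i))]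

theorem Matrix.le_dotProduct_diagonal_add_mulVec {a : ℝ} (hd : ∀ i, a ≤ d i)
    {P : Matrix ι ι ℝ} (hP : P.PosSemidef) (x : ι → ℝ) :
    a * (x ⬝ᵥ x) ≤ x ⬝ᵥ (diagonal d + P) *ᵥ x := by
  have hPx := hP.dotProduct_mulVec_nonneg x
  rw [star_trivial] at hPx
  rw [add_mulVec, dotProduct_add]
  linarith [le_dotProduct_diagonal_mulVec hd x]

end Diagonal

section Gram

variable {ρ ι : Type*} [Fintype ρ] [DecidableEq ρ] {Z : Matrix ρ ι ℝ} {w : ρ → ℝ}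

theorem Matrix.transpose_mul_diagonal_mul_apply (Z : Matrix ρ ι ℝ) (w : ρ → ℝ) (i j : ι) :
    (Zᵀ * diagonal w * Z) i j = ∑ l, w l * Z l i * Z l j := by
  rw [mul_apply]
  exact sum_congr rfl fun l _ => by rw [mul_diagonal, transpose_apply]; ring

theorem Matrix.transpose_mul_diagonal_mul_nonneg (hw : ∀ l, 0 ≤ w l) (hZ : ∀ l i, 0 ≤ Z l i)
    (i j : ι) : 0 ≤ (Zᵀ * diagonal w * Z) i j := by
  rw [transpose_mul_diagonal_mul_apply]
  exact sum_nonneg fun l _ => mul_nonneg (mul_nonneg (hw l) (hZ l i)) (hZ l j)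

variable [Fintype ι]

theorem Matrix.posSemidef_transpose_mul_diagonal_mul (hw : ∀ l, 0 ≤ w l)
    (Z : Matrix ρ ι ℝ) : (Zᵀ * diagonal w * Z).PosSemidef := by
  simpa using (posSemidef_diagonal_iff.mpr hw).conjTranspose_mul_mul_same Z

theorem Matrix.transpose_mul_diagonal_mul_mulVec_of_mulVec_eq_zero {x : ι → ℝ}
    (hx : Z *ᵥ x = 0) : (Zᵀ * diagonal w * Z) *ᵥ x = 0 := by
  rw [← mulVec_mulVec, hx, mulVec_zero]

theorem Matrix.sum_transpose_mul_diagonal_mul_row (hZ : ∀ l i, Z l i = 0 ∨ Z l i = 1) {c : ℝ}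
    (hrow : ∀ l, ∑ j, Z l j = c) (i : ι) :
    ∑ j, (Zᵀ * diagonal w * Z) i j = c * (Zᵀ * diagonal w * Z) i i := by
  simp only [transpose_mul_diagonal_mul_apply]
  rw [sum_comm, mul_sum]
  refine sum_congr rfl fun l _ => ?_
  rw [← mul_sum, hrow]
  rcases hZ l i with h | h <;> simp [h, mul_comm]

end Gram

section Grouped

variable {ρ κ : Type*} [Fintype κ] {β : κ → Type*} [∀ k, Fintype (β k)]
  {Z : Matrix ρ (Σ k, β k) ℝ}

theorem Matrix.sum_row_eq_card_of_sum_block_eq_one (hZ : ∀ l k, ∑ j, Z l ⟨k, j⟩ = 1)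
    (l : ρ) : ∑ i, Z l i = Fintype.card κ := by
  rw [← univ_sigma_univ, sum_sigma]
  simp [hZ l]

theorem Matrix.mulVec_comp_fst_eq_zero (hZ : ∀ l k, ∑ j, Z l ⟨k, j⟩ = 1) {c : κ → ℝ}
    (hc : ∑ k, c k = 0) : Z *ᵥ (c ∘ Sigma.fst) = 0 := by
  ext l
  simp only [mulVec, dotProduct, ← univ_sigma_univ, sum_sigma, Function.comp_apply,
    ← sum_mul, hZ l, one_mul, hc, Pi.zero_apply]

/-- Without rows (`ρ` empty) some blocks may be empty, hence the `min`. -/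
theorem Matrix.min_le_finrank_ker_mulVecLin (hZ : ∀ l k, ∑ j, Z l ⟨k, j⟩ = 1) :
    min (Fintype.card κ - 1) (Fintype.card (Σ k, β k)) ≤
      Module.finrank ℝ (LinearMap.ker Z.mulVecLin) := by
  rcases isEmpty_or_nonempty ρ with hρ | ⟨⟨l⟩⟩
  · rw [LinearMap.ker_eq_top.mpr (Subsingleton.elim _ _), finrank_top,
      Module.finrank_fintype_fun_eq_card]
    exact min_le_right _ _
  refine (min_le_left _ _).trans ?_
  have hfst : Function.Surjective (Sigma.fst : (Σ k, β k) → κ) := fun k => by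
    obtain ⟨j⟩ : Nonempty (β k) := by
      by_contra h
      simpa [not_nonempty_iff.mp h] using hZ l k
    exact ⟨⟨k, j⟩, rfl⟩
  let total : (κ → ℝ) →ₗ[ℝ] ℝ := Fintype.linearCombination ℝ fun _ => 1
  have htotal : ∀ c, total c = ∑ k, c k := fun c => by
    simp [total, Fintype.linearCombination_apply]
  let blockConst := (LinearMap.funLeft ℝ ℝ (Sigma.fst : (Σ k, β k) → κ)).restrict
    (p := LinearMap.ker total) (q := LinearMap.ker Z.mulVecLin) fun c hc =>
      mulVec_comp_fst_eq_zero hZ ((htotal c).symm.trans hc)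
  calc Fintype.card κ - 1
      ≤ Module.finrank ℝ (LinearMap.ker total) := by
        have hrank := total.finrank_range_add_finrank_ker
        have hrange := (LinearMap.range total).finrank_le
        simp only [Module.finrank_fintype_fun_eq_card, Module.finrank_self] at hrank hrange
        omega
    _ ≤ Module.finrank ℝ (LinearMap.ker Z.mulVecLin) :=
        LinearMap.finrank_le_finrank_of_injective (f := blockConst) fun a b hab => Subtype.ext <|
          LinearMap.funLeft_injective_of_surjective (R := ℝ) (M := ℝ) _ hfst
            (congrArg Subtype.val hab)

end Grouped

theorem Matrix.exists_le_sum_row_of_hasEigenvalue {ι : Type*} [Fintype ι] [DecidableEq ι]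
    {M : Matrix ι ι ℝ} (hM : ∀ i j, i ≠ j → 0 ≤ M i j) {μ : ℝ}
    (hμ : Module.End.HasEigenvalue (toLin' M) μ) : ∃ k, μ ≤ ∑ j, M k j := by
  obtain ⟨k, hk⟩ := eigenvalue_mem_ball hμ
  refine ⟨k, ?_⟩
  rw [Metric.mem_closedBall, Real.dist_eq] at hk
  have hnorm : ∑ j ∈ univ.erase k, ‖M k j‖ = ∑ j ∈ univ.erase k, M k j :=
    sum_congr rfl fun j hj => Real.norm_of_nonneg (hM k j (ne_of_mem_erase hj).symm)
  rw [← add_sum_erase _ _ (mem_univ k), ← hnorm]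
  linarith [le_abs_self (μ - M k k)]

namespace Matrix.IsHermitian

variable {ι : Type*} [Fintype ι] [DecidableEq ι] {M : Matrix ι ι ℝ} (hM : M.IsHermitian)

theorem dotProduct_eq_sum_eigenvectorBasis (x y : ι → ℝ) :
    x ⬝ᵥ y =
      ∑ i, (⇑(hM.eigenvectorBasis i) ⬝ᵥ x) * (⇑(hM.eigenvectorBasis i) ⬝ᵥ y) := by
  have := hM.eigenvectorBasis.sum_inner_mul_inner (WithLp.toLp 2 x) (WithLp.toLp 2 y)
  simp only [EuclideanSpace.inner_eq_star_dotProduct, star_trivial] at this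
  rw [dotProduct_comm, ← this]
  exact sum_congr rfl fun i _ => by rw [dotProduct_comm y]

theorem eigenvectorBasis_dotProduct_mulVec (i : ι) (x : ι → ℝ) :
    ⇑(hM.eigenvectorBasis i) ⬝ᵥ M *ᵥ x =
      hM.eigenvalues i * (⇑(hM.eigenvectorBasis i) ⬝ᵥ x) := by
  rw [dotProduct_mulVec, ← mulVec_transpose, ← conjTranspose_eq_transpose_of_trivial, hM.eq,
    mulVec_eigenvectorBasis, smul_dotProduct, smul_eq_mul]

theorem dotProduct_mulVec_eq_sum_eigenvalues (x : ι → ℝ) :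
    x ⬝ᵥ M *ᵥ x = ∑ i, hM.eigenvalues i * (⇑(hM.eigenvectorBasis i) ⬝ᵥ x) ^ 2 := by
  rw [hM.dotProduct_eq_sum_eigenvectorBasis]
  exact sum_congr rfl fun i _ => by rw [hM.eigenvectorBasis_dotProduct_mulVec]; ring

theorem eigenvectorBasis_dotProduct_self (i : ι) :
    ⇑(hM.eigenvectorBasis i) ⬝ᵥ ⇑(hM.eigenvectorBasis i) = 1 := by
  have h : inner ℝ (hM.eigenvectorBasis i) (hM.eigenvectorBasis i) = 1 := by
    rw [real_inner_self_eq_norm_sq, hM.eigenvectorBasis.orthonormal.1 i, one_pow]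
  rwa [EuclideanSpace.inner_eq_star_dotProduct, star_trivial] at h

theorem eigenvalues_eq_dotProduct_mulVec (i : ι) :
    hM.eigenvalues i = ⇑(hM.eigenvectorBasis i) ⬝ᵥ M *ᵥ ⇑(hM.eigenvectorBasis i) := by
  simpa using hM.eigenvalues_eq i

theorem hasEigenvalue_eigenvalues (i : ι) :
    Module.End.HasEigenvalue (toLin' M) (hM.eigenvalues i) :=
  Module.End.hasEigenvalue_iff_mem_spectrum.mpr <|
    (spectrum_toLin' M).symm ▸ hM.eigenvalues_mem_spectrum_real i

theorem le_eigenvalues_of_forall_le_dotProduct_mulVec {c : ℝ}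
    (hc : ∀ x, c * (x ⬝ᵥ x) ≤ x ⬝ᵥ M *ᵥ x) (i : ι) : c ≤ hM.eigenvalues i := by
  simpa [hM.eigenvectorBasis_dotProduct_self, ← hM.eigenvalues_eq_dotProduct_mulVec]
    using hc (hM.eigenvectorBasis i)

theorem dotProduct_mulVec_le_sup'_eigenvalues (hne : (univ : Finset ι).Nonempty) (x : ι → ℝ) :
    x ⬝ᵥ M *ᵥ x ≤ univ.sup' hne hM.eigenvalues * (x ⬝ᵥ x) := by
  rw [hM.dotProduct_mulVec_eq_sum_eigenvalues, hM.dotProduct_eq_sum_eigenvectorBasis x x, mul_sum]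
  refine sum_le_sum fun i _ => ?_
  rw [← sq]
  exact mul_le_mul_of_nonneg_right (le_sup' _ (mem_univ i)) (sq_nonneg _)

theorem eigenvalues_le_of_forall_sum_row_le (hoff : ∀ i j, i ≠ j → 0 ≤ M i j) {c : ℝ}
    (hc : ∀ i, ∑ j, M i j ≤ c) (i : ι) : hM.eigenvalues i ≤ c :=
  let ⟨k, hk⟩ := exists_le_sum_row_of_hasEigenvalue hoff (hM.hasEigenvalue_eigenvalues i)
  hk.trans (hc k)

/-- Rayleigh quotient at the all-ones vector. -/
theorem le_sup'_eigenvalues_of_forall_le_sum_row (hne : (univ : Finset ι).Nonempty) {c : ℝ}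
    (hc : ∀ i, c ≤ ∑ j, M i j) : c ≤ univ.sup' hne hM.eigenvalues := by
  have hcard : (0 : ℝ) < Fintype.card ι := by
    exact_mod_cast Fintype.card_pos_iff.mpr ⟨hne.choose⟩
  have hsum : Fintype.card ι * c ≤ 1 ⬝ᵥ M *ᵥ 1 := by
    simpa [mulVec, dotProduct] using card_nsmul_le_sum univ _ c fun i _ => hc i
  have hsup := hM.dotProduct_mulVec_le_sup'_eigenvalues hne 1
  rw [show (1 : ι → ℝ) ⬝ᵥ 1 = Fintype.card ι by simp] at hsup
  nlinarith

/-- The easy half of the Courant–Fischer min-max principle. -/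
theorem eigenvalues_le_of_lt_finrank (e : Fin (Fintype.card ι) ≃ ι)
    (he : Monotone (hM.eigenvalues ∘ e)) {V : Submodule ℝ (ι → ℝ)} {c : ℝ}
    (hV : ∀ x ∈ V, x ⬝ᵥ M *ᵥ x ≤ c * (x ⬝ᵥ x)) (t : Fin (Fintype.card ι))
    (ht : (t : ℕ) < Module.finrank ℝ V) : hM.eigenvalues (e t) ≤ c := by
  let coeffsBelow : V →ₗ[ℝ] Fin t → ℝ :=
    { toFun := fun x r => ⇑(hM.eigenvectorBasis (e (Fin.castLE t.isLt.le r))) ⬝ᵥ x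
      map_add' := fun x y => by ext; simp [dotProduct_add]
      map_smul' := fun a x => by ext; simp [dotProduct_smul] }
  obtain ⟨x, hxker, hx0⟩ := (Submodule.ne_bot_iff _).mp <|
    LinearMap.ker_ne_bot_of_finrank_lt (f := coeffsBelow) (by simpa using ht)
  have hcoeff : ∀ s : Fin (Fintype.card ι), s < t →
      ⇑(hM.eigenvectorBasis (e s)) ⬝ᵥ (x : ι → ℝ) = 0 := fun s hs =>
    congrFun (LinearMap.mem_ker.mp hxker) ⟨s, hs⟩
  have hpos : 0 < (x : ι → ℝ) ⬝ᵥ x := by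
    simpa using dotProduct_star_self_pos_iff.mpr (Submodule.coe_eq_zero.not.mpr hx0)
  have hge : hM.eigenvalues (e t) * ((x : ι → ℝ) ⬝ᵥ x) ≤ (x : ι → ℝ) ⬝ᵥ M *ᵥ x := by
    rw [hM.dotProduct_mulVec_eq_sum_eigenvalues, hM.dotProduct_eq_sum_eigenvectorBasis x x,
      mul_sum, ← e.sum_comp, ← e.sum_comp]
    refine sum_le_sum fun s _ => ?_
    rcases lt_or_ge s t with hst | hts
    · simp [hcoeff s hst]
    · rw [← sq]
      exact mul_le_mul_of_nonneg_right (he hts) (sq_nonneg _)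
  exact le_of_mul_le_mul_right (hge.trans (hV x x.2)) hpos

end Matrix.IsHermitian

/-- For `K` grouped random effects, the non-preconditioned matrix
`M = Σ⁻¹ + ZᵀWZ` satisfies
(i) `1/max_i(Σ_{ii}) + K·min_i((ZᵀWZ)_{ii}) ≤ λ_max ≤ 1/min_i(Σ_{ii}) + K·max_i((ZᵀWZ)_{ii})`,
and (ii) its `K−1` smallest eigenvalues (the first `K−1` in any increasing enumeration
with multiplicity) all lie in `[1/max_i(Σ_{ii}), 1/min_i(Σ_{ii})]`. -/
theorem stmt10 {n K : ℕ} {m : Fin K → ℕ}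
    (hne : (Finset.univ : Finset ((k : Fin K) × Fin (m k))).Nonempty)
    (w : Fin n → ℝ) (hw : ∀ l, 0 < w l)
    (s : (k : Fin K) × Fin (m k) → ℝ) (hs : ∀ i, 0 < s i)
    (Z : Matrix (Fin n) ((k : Fin K) × Fin (m k)) ℝ)
    (hZbin : ∀ l i, Z l i = 0 ∨ Z l i = 1)
    (hZrow : ∀ l (k : Fin K), ∑ j : Fin (m k), Z l ⟨k, j⟩ = 1)
    (M : Matrix ((k : Fin K) × Fin (m k)) ((k : Fin K) × Fin (m k)) ℝ)
    (hM : M = Matrix.diagonal (fun i => (s i)⁻¹) + Zᵀ * Matrix.diagonal w * Z)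
    (hHerm : M.IsHermitian) :
    ((Finset.univ.sup' hne s)⁻¹
        + K * (Finset.univ.inf' hne fun i => (Zᵀ * Matrix.diagonal w * Z) i i)
      ≤ Finset.univ.sup' hne hHerm.eigenvalues
    ∧ Finset.univ.sup' hne hHerm.eigenvalues
      ≤ (Finset.univ.inf' hne s)⁻¹
        + K * (Finset.univ.sup' hne fun i => (Zᵀ * Matrix.diagonal w * Z) i i))
    ∧ ∀ e : Fin (Fintype.card ((k : Fin K) × Fin (m k))) ≃ ((k : Fin K) × Fin (m k)),
      Monotone (fun t => hHerm.eigenvalues (e t)) →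
      ∀ t : Fin (Fintype.card ((k : Fin K) × Fin (m k))), (t : ℕ) < K - 1 →
        (Finset.univ.sup' hne s)⁻¹ ≤ hHerm.eigenvalues (e t)
        ∧ hHerm.eigenvalues (e t) ≤ (Finset.univ.inf' hne s)⁻¹ := by
  set A := Zᵀ * diagonal w * Z
  have hsup (i) : (univ.sup' hne s)⁻¹ ≤ (s i)⁻¹ :=
    inv_anti₀ (hs i) (le_sup' s (mem_univ i))
  have hinf (i) : (s i)⁻¹ ≤ (univ.inf' hne s)⁻¹ :=
    inv_anti₀ ((lt_inf'_iff hne).2 fun i _ => hs i) (inf'_le s (mem_univ i))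
  have hrow (i) : ∑ j, M i j = (s i)⁻¹ + K * A i i := by
    rw [← sum_transpose_mul_diagonal_mul_row hZbin
      (by simpa using sum_row_eq_card_of_sum_block_eq_one hZrow), hM]
    simp [sum_add_distrib, diagonal_apply, A]
  have hoff (i j) (hij : i ≠ j) : 0 ≤ M i j := by
    simpa [hM, diagonal_apply_ne _ hij] using transpose_mul_diagonal_mul_nonneg
      (fun l => (hw l).le) (fun l i => by rcases hZbin l i with h | h <;> simp [h]) i j
  refine ⟨⟨?_, ?_⟩, fun e he t ht => ⟨?_, ?_⟩⟩
  · refine hHerm.le_sup'_eigenvalues_of_forall_le_sum_row hne fun i => ?_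
    rw [hrow]
    exact add_le_add (hsup i) (mul_le_mul_of_nonneg_left (inf'_le _ (mem_univ i)) K.cast_nonneg)
  · refine sup'_le hne _ fun i _ => hHerm.eigenvalues_le_of_forall_sum_row_le hoff (fun k => ?_) i
    rw [hrow]
    exact add_le_add (hinf k)
      (mul_le_mul_of_nonneg_left (le_sup' (fun i => A i i) (mem_univ k)) K.cast_nonneg)
  · exact hHerm.le_eigenvalues_of_forall_le_dotProduct_mulVec (fun x => hM ▸
      le_dotProduct_diagonal_add_mulVec hsup
        (posSemidef_transpose_mul_diagonal_mul (fun l => (hw l).le) Z) x) _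
  · refine hHerm.eigenvalues_le_of_lt_finrank e he (V := LinearMap.ker Z.mulVecLin)
      (fun x hx => ?_) t
      ((lt_min (by simpa using ht) t.isLt).trans_le (min_le_finrank_ker_mulVecLin hZrow))
    rw [hM, add_mulVec, transpose_mul_diagonal_mul_mulVec_of_mulVec_eq_zero hx, add_zero]
    exact dotProduct_diagonal_mulVec_le hinf x
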